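/- In the classifier NOp^{NOp+1} for the polynomial monad NOp of non-symmetric operads, every connected component of each category in the collection has a terminal object; hence NOp is a tame polynomial monad. A terminal object of a component is a planar rooted tree with vertices coloured by X and K such that adjacent vertices have different colours and all vertices incident to the root or to a leaf are coloured X. -/

import Mathlib

/-!
STATEMENT 15: In the classifier `NOp^{NOp+1}` for the polynomial monad for
non-symmetric operads — whose objects are (isomorphism classes of) planar rooted
trees with vertices coloured by `X` and `K`, and whose morphisms are generated by
contracting edges between `X`-coloured vertices and inserting unary `X`-coloured
vertices — every connected component has a terminal object; hence `NOp` is tame.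
Moreover a terminal object of a component is a tree in which adjacent vertices have
different colours and every vertex incident to the root or to a leaf is coloured `X`.

We model the classifier as the preorder generated by the one-step moves (the
classifier category of trees is a preorder), with `X = true`, `K = false`.
-/

/-- Planar rooted trees with vertices coloured by `X`/`K` (encoded as `Bool`,
`X = true`).  `leaf` represents a leaf edge (no vertex). -/
inductive CTree : Type
  | leaf : CTree
  | node : Bool → List CTree → CTree

namespace CTree

/-- One-step moves of the classifier `NOp^{NOp+1}`: contracting an edge between two
`X`-coloured vertices, inserting a unary `X`-coloured vertex below the root, above
any edge, and the congruence closure under subtrees. -/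
inductive Step : CTree → CTree → Prop
  -- contract an edge between two `X`-vertices
  | contract (cs₁ cs₂ ds : List CTree) :
      Step (node true (cs₁ ++ [node true ds] ++ cs₂)) (node true (cs₁ ++ ds ++ cs₂))
  -- insert a unary `X`-vertex below a tree (on the root edge or on any inner edge,
  -- via the congruence rule)
  | insert (t : CTree) : Step t (node true [t])
  -- congruence: perform a move in a subtree
  | congr (c : Bool) (cs₁ cs₂ : List CTree) {t t' : CTree} :
      Step t t' → Step (node c (cs₁ ++ [t] ++ cs₂)) (node c (cs₁ ++ [t'] ++ cs₂))

/-- Morphisms of the classifier: finite composites of one-step moves. -/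
def Reaches : CTree → CTree → Prop := Relation.ReflTransGen Step

/-- Two objects are in the same connected component if they are related by a zigzag
of morphisms. -/
def Connected : CTree → CTree → Prop :=
  Relation.ReflTransGen (fun s t => Step s t ∨ Step t s)

/-- `Ok c t`: in the tree `t`, hanging below a vertex of colour `c`, adjacent
vertices have different colours and every vertex incident to a leaf is coloured `X`
(in particular a leaf may only hang below an `X`-vertex). -/
inductive Ok : Bool → CTree → Prop
  | leaf : Ok true leaf
  | node {c c' : Bool} {cs : List CTree} :
      c' ≠ c → (∀ t ∈ cs, Ok c' t) → Ok c (node c' cs)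

/-- Terminal trees: the root vertex is coloured `X`, adjacent vertices have different
colours, and vertices incident to the root or to a leaf are coloured `X`. -/
def IsTerm : CTree → Prop
  | leaf => False
  | node c cs => c = true ∧ ∀ t ∈ cs, Ok true t

/-!
Sending a tree `t` to the forest `terminalForest t` (merge every maximal region of `X`-vertices
into one vertex, then put an `X`-vertex on every edge leaving a `K`-vertex) is invariant under
both moves, hence constant on connected components. Conversely every `t` reaches
`node true (terminalForest t)`: insert a unary `X`-vertex below it, then recursively contract
`X`–`X` edges and insert `X`-vertices above the `K`-vertices. This tree is alternating with `X`
at the root and the leaves, so it is the terminal object of the component.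
-/

theorem reaches_congr (c : Bool) (cs₁ cs₂ : List CTree) {t t' : CTree} (h : Reaches t t') :
    Reaches (node c (cs₁ ++ [t] ++ cs₂)) (node c (cs₁ ++ [t'] ++ cs₂)) :=
  h.lift (fun t => node c (cs₁ ++ [t] ++ cs₂)) fun _ _ => Step.congr c cs₁ cs₂

theorem reaches_node_map (c : Bool) (f : CTree → CTree) :
    ∀ (pre cs : List CTree), (∀ t ∈ cs, Reaches t (f t)) →
      Reaches (node c (pre ++ cs)) (node c (pre ++ cs.map f))
  | _, [], _ => .refl
  | pre, t :: cs, h => by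
    have head := reaches_congr c pre cs (h t List.mem_cons_self)
    have tail := reaches_node_map c f (pre ++ [f t]) cs fun s hs => h s (List.mem_cons_of_mem t hs)
    simp only [List.append_assoc, List.singleton_append, List.map_cons] at head tail ⊢
    exact head.trans tail

theorem reaches_node_true_flatten (g : CTree → List CTree) :
    ∀ (pre cs : List CTree), (∀ t ∈ cs, Reaches t (node true (g t))) →
      Reaches (node true (pre ++ cs)) (node true (pre ++ (cs.map g).flatten))
  | _, [], _ => .refl
  | pre, t :: cs, h => by
    have head := reaches_congr true pre cs (h t List.mem_cons_self)
    have contract := Step.contract pre cs (g t)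
    have tail := reaches_node_true_flatten g (pre ++ g t) cs
      fun s hs => h s (List.mem_cons_of_mem t hs)
    simp only [List.append_assoc, List.singleton_append, List.map_cons,
      List.flatten_cons] at head contract tail ⊢
    exact (head.tail contract).trans tail

def terminalForest : CTree → List CTree
  | leaf => [leaf]
  | node true cs => (cs.map terminalForest).flatten
  | node false cs => [node false (cs.map fun t => node true (terminalForest t))]

theorem reaches_terminalForest : ∀ t : CTree, Reaches t (node true (terminalForest t))
  | leaf => by
    rw [terminalForest]
    exact .single (Step.insert leaf)
  | node true cs => by
    rw [terminalForest]
    simpa using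
      reaches_node_true_flatten terminalForest [] cs fun t _ => reaches_terminalForest t
  | node false cs => by
    have children :
        Reaches (node false cs) (node false (cs.map fun t => node true (terminalForest t))) := by
      simpa using reaches_node_map false _ [] cs fun t _ => reaches_terminalForest t
    rw [terminalForest]
    exact children.tail (Step.insert _)

theorem ok_of_mem_terminalForest : ∀ t : CTree, ∀ u ∈ terminalForest t, Ok true u
  | leaf, u, hu => by
    rw [terminalForest, List.mem_singleton] at hu
    exact hu ▸ Ok.leaf
  | node true cs, u, hu => by
    simp only [terminalForest, List.mem_flatten, List.mem_map] at hu
    obtain ⟨_, ⟨t, -, rfl⟩, hu⟩ := hu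
    exact ok_of_mem_terminalForest t u hu
  | node false cs, u, hu => by
    rw [terminalForest, List.mem_singleton] at hu
    subst hu
    refine Ok.node (by decide) fun s hs => ?_
    obtain ⟨t, ht, rfl⟩ := List.mem_map.1 hs
    exact Ok.node (by decide) (ok_of_mem_terminalForest t)

theorem terminalForest_eq_of_step {s t : CTree} (h : Step s t) :
    terminalForest s = terminalForest t := by
  induction h with
  | contract => simp [terminalForest]
  | insert => simp [terminalForest]
  | congr c _ _ _ ih => cases c <;> simp [terminalForest, ih]

theorem terminalForest_eq_of_connected {s t : CTree} (h : Connected s t) :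
    terminalForest s = terminalForest t := by
  have := h.lift terminalForest (p := Eq) fun _ _ hst =>
    hst.elim terminalForest_eq_of_step fun hts => (terminalForest_eq_of_step hts).symm
  rwa [Relation.reflTransGen_eq_self] at this

end CTree

open CTree

/-- Tameness of the polynomial monad `NOp` (Lemma 4.13 of the
paper): every connected component of the classifier `NOp^{NOp+1}` has a terminal
object, which is an alternating `X`/`K`-tree with `X`-vertices at the root and at
the leaves. -/
theorem nop_tame :
    ∀ S : CTree, ∃ T : CTree, IsTerm T ∧ Reaches S T ∧
      ∀ S' : CTree, Connected S S' → Reaches S' T := by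
  intro S
  refine ⟨node true (terminalForest S), ⟨rfl, ok_of_mem_terminalForest S⟩,
    reaches_terminalForest S, fun S' h => ?_⟩
  rw [terminalForest_eq_of_connected h]
  exact reaches_terminalForest S'
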